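/- Let E be an S-dominating effect algebra and S ⊆ S(E). If the join of S computed in E exists, then it belongs to S(E) and equals the join of S computed in S(E). Hence S(E) is bifull in E. -/

import Mathlib

universe u v

/-- An effect algebra: a partial algebra `(E; ⊕, 0, 1)` with `0 ≠ 1`, where `⊕` is
partially defined (domain `D`), commutative and associative where defined, every
element has a unique orthosupplement (`compl`, skolemizing axiom (Eiii)), and
`1 ⊕ x` defined implies `x = 0`. -/
structure EffectAlgebra (E : Type u) where
  D : E → E → Prop
  oplus : E → E → E
  zero : E
  one : E
  zero_ne_one : zero ≠ one
  D_comm : ∀ x y, D x y → D y x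
  oplus_comm : ∀ x y, D x y → oplus x y = oplus y x
  assoc : ∀ x y z, D x y → D (oplus x y) z →
      D y z ∧ D x (oplus y z) ∧ oplus (oplus x y) z = oplus x (oplus y z)
  assoc' : ∀ x y z, D y z → D x (oplus y z) →
      D x y ∧ D (oplus x y) z ∧ oplus (oplus x y) z = oplus x (oplus y z)
  compl : E → E
  D_compl : ∀ x, D x (compl x)
  oplus_compl : ∀ x, oplus x (compl x) = one
  compl_unique : ∀ x y, D x y → oplus x y = one → y = compl x
  one_max : ∀ x, D one x → x = zero

namespace EffectAlgebra

variable {E : Type u} (A : EffectAlgebra E)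

/-- The induced order: `x ≤ y` iff `x ⊕ z = y` for some `z`. -/
def le (x y : E) : Prop := ∃ z, A.D x z ∧ A.oplus x z = y

def IsLB (S : Set E) (m : E) : Prop := ∀ x ∈ S, A.le m x
def IsUB (S : Set E) (m : E) : Prop := ∀ x ∈ S, A.le x m

/-- `m` is the infimum of `S` computed within the subposet `P`. -/
def IsInfIn (P : Set E) (S : Set E) (m : E) : Prop :=
  m ∈ P ∧ A.IsLB S m ∧ ∀ z ∈ P, A.IsLB S z → A.le z m

/-- `m` is the supremum of `S` computed within the subposet `P`. -/
def IsSupIn (P : Set E) (S : Set E) (m : E) : Prop :=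
  m ∈ P ∧ A.IsUB S m ∧ ∀ z ∈ P, A.IsUB S z → A.le m z

/-- `w` is sharp iff the meet `w ∧ w'` exists in `E` and equals `0`. -/
def Sharp (w : E) : Prop := A.IsInfIn Set.univ {w, A.compl w} A.zero

/-- The set `S(E)` of sharp elements. -/
def sharpSet : Set E := {w | A.Sharp w}

def HasMeet (x y : E) : Prop := ∃ m, A.IsInfIn Set.univ {x, y} m
def HasJoin (x y : E) : Prop := ∃ j, A.IsSupIn Set.univ {x, y} j

/-- Every `x` has a least sharp element above it, which is the infimum of the sharp
elements above `x` both in `E` and in `S(E)`. -/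
def SharplyDominating : Prop :=
  ∀ x : E, ∃ w, A.Sharp w ∧ A.le x w ∧
    A.IsInfIn Set.univ {v | A.Sharp v ∧ A.le x v} w ∧
    A.IsInfIn A.sharpSet {v | A.Sharp v ∧ A.le x v} w

/-- Sharply dominating, and `x ∧ w` exists for every `x ∈ E`, `w ∈ S(E)`. -/
def SDominating : Prop :=
  A.SharplyDominating ∧ ∀ x w : E, A.Sharp w → A.HasMeet x w

end EffectAlgebra

/-- `SumDef A l s` : the orthosum of the finite list `l` is defined and equals `s`. -/
inductive EffectAlgebra.SumDef {E : Type u} (A : EffectAlgebra E) : List E → E → Prop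
  | nil : EffectAlgebra.SumDef A [] A.zero
  | cons {x : E} {l : List E} {s : E} : EffectAlgebra.SumDef A l s → A.D x s →
      EffectAlgebra.SumDef A (x :: l) (A.oplus x s)

namespace EffectAlgebra

variable {E : Type u} (A : EffectAlgebra E)

/-- A family is orthogonal iff every finite subfamily has a defined orthosum. -/
def Orthogonal {ι : Type v} (x : ι → E) : Prop :=
  ∀ l : List ι, l.Nodup → ∃ s, A.SumDef (l.map x) s

/-- The set of finite partial orthosums of a family. -/
def finiteSums {ι : Type v} (x : ι → E) : Set E :=
  {s | ∃ l : List ι, l.Nodup ∧ A.SumDef (l.map x) s}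

/-- `v = ⊕ x` : the family is orthogonal and `v` is the supremum in `E` of all
finite partial orthosums. -/
def HasOrthoSum {ι : Type v} (x : ι → E) (v : E) : Prop :=
  A.Orthogonal x ∧ A.IsSupIn Set.univ (A.finiteSums x) v

/-- Every family dominated elementwise by an orthogonal family of sharp
elements has an orthosum. -/
def SharplyOrthocomplete : Prop :=
  ∀ (ι : Type u) (x w : ι → E), (∀ k, A.Sharp (w k)) → A.Orthogonal w →
    (∀ k, A.le (x k) (w k)) → ∃ v, A.HasOrthoSum x v

/-- `c` is central: for every `y` the meets `y ∧ c`, `y ∧ c'` exist and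
`y = (y ∧ c) ∨ (y ∧ c')`. -/
def Central (c : E) : Prop :=
  ∀ y : E, ∃ m₁ m₂, A.IsInfIn Set.univ {y, c} m₁ ∧
    A.IsInfIn Set.univ {y, A.compl c} m₂ ∧ A.IsSupIn Set.univ {m₁, m₂} y

/-- The center `C(E)`. -/
def centerSet : Set E := {c | A.Central c}

def CentrallyDominating : Prop :=
  ∀ x : E, ∃ c, A.Central c ∧ A.le x c ∧
    A.IsInfIn Set.univ {d | A.Central d ∧ A.le x d} c ∧
    A.IsInfIn A.centerSet {d | A.Central d ∧ A.le x d} c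

def CentrallyOrthocomplete : Prop :=
  ∀ (ι : Type u) (x c : ι → E), (∀ k, A.Central (c k)) → A.Orthogonal c →
    (∀ k, A.le (x k) (c k)) → ∃ v, A.HasOrthoSum x v

/-- `P` is bifull in `E`: for `S ⊆ P`, the join of `S` in `P` exists iff the join
of `S` in `E` exists, and then they coincide. -/
def Bifull (P : Set E) : Prop :=
  ∀ S ⊆ P, (∀ s, A.IsSupIn P S s → A.IsSupIn Set.univ S s) ∧
    (∀ s, A.IsSupIn Set.univ S s → A.IsSupIn P S s)

/-- The subposet `P` is a complete lattice: every subset of `P` has a supremum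
(and an infimum) computed within `P`. -/
def CompleteIn (P : Set E) : Prop :=
  ∀ S ⊆ P, (∃ s, A.IsSupIn P S s) ∧ (∃ m, A.IsInfIn P S m)

/-- `E` is a complete lattice. -/
def Complete : Prop :=
  ∀ S : Set E, (∃ s, A.IsSupIn Set.univ S s) ∧ (∃ m, A.IsInfIn Set.univ S m)

/-- The induced order of `E` is a lattice. -/
def LatticeOrdered : Prop := ∀ x y : E, A.HasMeet x y ∧ A.HasJoin x y

/-- `x ↔ y` : `x ∨ y = x ⊕ (y ⊖ (x ∧ y))`. -/
def Compatible (x y : E) : Prop :=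
  ∃ m j z, A.IsInfIn Set.univ {x, y} m ∧ A.IsSupIn Set.univ {x, y} j ∧
    A.D m z ∧ A.oplus m z = y ∧ A.D x z ∧ A.oplus x z = j

/-- An MV-effect algebra: a lattice effect algebra all of whose pairs of elements
are compatible. -/
def MV : Prop := A.LatticeOrdered ∧ ∀ x y : E, A.Compatible x y

/-- `nx = x ⊕ ⋯ ⊕ x` (`n` times) is defined. -/
def nTimesDef (n : ℕ) (x : E) : Prop := ∃ s, A.SumDef (List.replicate n x) s

/-- `ord x < ∞` for every nonzero `x`. -/
def IsArchimedean : Prop := ∀ x : E, x ≠ A.zero → ∃ n : ℕ, ¬ A.nTimesDef n x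

def Atom (a : E) : Prop := a ≠ A.zero ∧ ∀ b, A.le b a → b = A.zero ∨ b = a

def Atomic : Prop := ∀ x : E, x ≠ A.zero → ∃ a, A.Atom a ∧ A.le a x

/-- The subposet `P` (closed under `'`) is an orthomodular lattice. -/
def OrthomodularIn (P : Set E) : Prop :=
  (∀ x ∈ P, ∀ y ∈ P, (∃ m, A.IsInfIn P {x, y} m) ∧ (∃ j, A.IsSupIn P {x, y} j)) ∧
  A.zero ∈ P ∧ A.one ∈ P ∧ (∀ x ∈ P, A.compl x ∈ P) ∧
  (∀ x ∈ P, A.IsInfIn P {x, A.compl x} A.zero ∧ A.IsSupIn P {x, A.compl x} A.one) ∧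
  (∀ x ∈ P, ∀ y ∈ P, A.le x y →
    ∃ m, A.IsInfIn P {y, A.compl x} m ∧ A.IsSupIn P {x, m} y)

def DistributiveIn (P : Set E) : Prop :=
  ∀ x ∈ P, ∀ y ∈ P, ∀ z ∈ P, ∀ jyz mxy mxz m : E,
    A.IsSupIn P {y, z} jyz → A.IsInfIn P {x, y} mxy → A.IsInfIn P {x, z} mxz →
    A.IsInfIn P {x, jyz} m → A.IsSupIn P {mxy, mxz} m

/-- The subposet `P` is a Boolean algebra (complemented distributive lattice with
bounds, complement given by `'`). -/
def BooleanIn (P : Set E) : Prop :=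
  (∀ x ∈ P, ∀ y ∈ P, (∃ m, A.IsInfIn P {x, y} m) ∧ (∃ j, A.IsSupIn P {x, y} j)) ∧
  A.zero ∈ P ∧ A.one ∈ P ∧ (∀ x ∈ P, A.compl x ∈ P) ∧
  (∀ x ∈ P, A.IsInfIn P {x, A.compl x} A.zero ∧ A.IsSupIn P {x, A.compl x} A.one) ∧
  A.DistributiveIn P

/-- A block: a maximal set of pairwise compatible elements. -/
def Block (M : Set E) : Prop :=
  (∀ x ∈ M, ∀ y ∈ M, A.Compatible x y) ∧
  ∀ N : Set E, M ⊆ N → (∀ x ∈ N, ∀ y ∈ N, A.Compatible x y) → N = M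

def AtomIn (M : Set E) (a : E) : Prop :=
  a ∈ M ∧ a ≠ A.zero ∧ ∀ b ∈ M, A.le b a → b = A.zero ∨ b = a

def AtomicIn (M : Set E) : Prop :=
  ∀ x ∈ M, x ≠ A.zero → ∃ a, A.AtomIn M a ∧ A.le a x

end EffectAlgebra

/-!
If `z` is the join in `E` of sharp elements, let `w` be the least sharp element above `z` and
`c` the greatest sharp element below `z` (the orthosupplement of the least sharp element above
`z'`). Every element of the family is sharp and below `z`, hence below `c`; so `w ≤ c ≤ z ≤ w`
and `z = w` is sharp. Conversely, if `s` is the join of the family in `S(E)` and `u` is any upper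
bound in `E`, the same squeeze applied to `u ∧ s` shows `u ∧ s = s`, i.e. `s ≤ u`.
-/

namespace EffectAlgebra

variable {E : Type u} (A : EffectAlgebra E)

lemma compl_one : A.compl A.one = A.zero := A.one_max _ (A.D_compl A.one)

lemma D_one_zero : A.D A.one A.zero := A.compl_one ▸ A.D_compl A.one

lemma oplus_one_zero : A.oplus A.one A.zero = A.one := A.compl_one ▸ A.oplus_compl A.one

lemma D_compl_left (x : E) : A.D (A.compl x) x := A.D_comm _ _ (A.D_compl x)

lemma oplus_compl_left (x : E) : A.oplus (A.compl x) x = A.one := by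
  rw [← A.oplus_comm x _ (A.D_compl x), A.oplus_compl]

lemma compl_compl (x : E) : A.compl (A.compl x) = x :=
  (A.compl_unique _ x (A.D_compl_left x) (A.oplus_compl_left x)).symm

lemma D_zero_and_oplus_zero (x : E) : A.D x A.zero ∧ A.oplus x A.zero = x := by
  have hD : A.D (A.oplus (A.compl x) x) A.zero := by
    rw [A.oplus_compl_left]; exact A.D_one_zero
  obtain ⟨hx0, hcx0, hassoc⟩ := A.assoc _ _ _ (A.D_compl_left x) hD
  have h := A.compl_unique _ _ hcx0 (by rw [← hassoc, A.oplus_compl_left, A.oplus_one_zero])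
  rw [A.compl_compl] at h
  exact ⟨hx0, h⟩

lemma oplus_right_cancel {a b c : E} (hac : A.D a c) (hbc : A.D b c)
    (h : A.oplus a c = A.oplus b c) : a = b := by
  have hDa : A.D (A.oplus a c) (A.compl (A.oplus a c)) := A.D_compl _
  have hDb : A.D (A.oplus b c) (A.compl (A.oplus a c)) := h ▸ hDa
  obtain ⟨-, ha, hassoc_a⟩ := A.assoc _ _ _ hac hDa
  obtain ⟨-, hb, hassoc_b⟩ := A.assoc _ _ _ hbc hDb
  have ea := A.compl_unique _ _ ha (by rw [← hassoc_a, A.oplus_compl])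
  have eb := A.compl_unique _ _ hb (by rw [← hassoc_b, ← h, A.oplus_compl])
  rw [← A.compl_compl a, ← A.compl_compl b, ← ea, ← eb]

lemma oplus_left_cancel {a b c : E} (hab : A.D a b) (hac : A.D a c)
    (h : A.oplus a b = A.oplus a c) : b = c := by
  refine A.oplus_right_cancel (A.D_comm _ _ hab) (A.D_comm _ _ hac) ?_
  rwa [← A.oplus_comm a b hab, ← A.oplus_comm a c hac]

lemma eq_zero_of_oplus_eq_zero {a b : E} (hab : A.D a b) (h : A.oplus a b = A.zero) :
    a = A.zero := by
  have hD : A.D (A.oplus a b) A.one := h ▸ A.D_comm _ _ A.D_one_zero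
  obtain ⟨hb1, -, -⟩ := A.assoc a b A.one hab hD
  have hb : b = A.zero := A.one_max b (A.D_comm _ _ hb1)
  rwa [hb, (A.D_zero_and_oplus_zero a).2] at h

lemma le_trans {a b c : E} (hab : A.le a b) (hbc : A.le b c) : A.le a c := by
  obtain ⟨u, hu, rfl⟩ := hab
  obtain ⟨v, hv, rfl⟩ := hbc
  obtain ⟨-, huv, hassoc⟩ := A.assoc a u v hu hv
  exact ⟨A.oplus u v, huv, hassoc.symm⟩

lemma le_antisymm {a b : E} (hab : A.le a b) (hba : A.le b a) : a = b := by
  obtain ⟨u, hu, rfl⟩ := hab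
  obtain ⟨v, hv, hback⟩ := hba
  obtain ⟨huv, huv', hassoc⟩ := A.assoc a u v hu hv
  obtain ⟨ha0, ha⟩ := A.D_zero_and_oplus_zero a
  have hsum : A.oplus u v = A.zero :=
    A.oplus_left_cancel huv' ha0 (by rw [← hassoc, hback, ha])
  rw [A.eq_zero_of_oplus_eq_zero huv hsum, ha]

lemma compl_anti {a b : E} (hab : A.le a b) : A.le (A.compl b) (A.compl a) := by
  obtain ⟨u, hu, rfl⟩ := hab
  obtain ⟨hub, hab', hassoc⟩ := A.assoc a u _ hu (A.D_compl _)
  have h := A.compl_unique _ _ hab' (by rw [← hassoc, A.oplus_compl])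
  exact ⟨u, A.D_comm _ _ hub, by rw [← A.oplus_comm _ _ hub, ← h]⟩

variable {A}

lemma Sharp.compl {w : E} (hw : A.Sharp w) : A.Sharp (A.compl w) := by
  rwa [Sharp, A.compl_compl, Set.pair_comm]

namespace SharplyDominating

lemma exists_least_sharp_ge (hSD : A.SharplyDominating) (x : E) :
    ∃ w, A.Sharp w ∧ A.le x w ∧ ∀ v, A.Sharp v → A.le x v → A.le w v := by
  obtain ⟨w, hw, hxw, hinf, -⟩ := hSD x
  exact ⟨w, hw, hxw, fun v hv hxv => hinf.2.1 v ⟨hv, hxv⟩⟩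

lemma exists_greatest_sharp_le (hSD : A.SharplyDominating) (x : E) :
    ∃ c, A.Sharp c ∧ A.le c x ∧ ∀ t, A.Sharp t → A.le t x → A.le t c := by
  obtain ⟨q, hq, hxq, hleast⟩ := hSD.exists_least_sharp_ge (A.compl x)
  refine ⟨A.compl q, hq.compl, A.compl_compl x ▸ A.compl_anti hxq, fun t ht htx => ?_⟩
  have hqt : A.le q (A.compl t) := hleast _ ht.compl (A.compl_anti htx)
  exact A.compl_compl t ▸ A.compl_anti hqt

lemma eq_of_isUB_of_le {T : Set E} {s x : E} (hSD : A.SharplyDominating)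
    (hT : T ⊆ A.sharpSet) (hs : A.IsSupIn A.sharpSet T s) (hx : A.IsUB T x)
    (hxs : A.le x s) : x = s := by
  obtain ⟨c, hc, hcx, hgreatest⟩ := hSD.exists_greatest_sharp_le x
  have hsc : A.le s c := hs.2.2 c hc fun t ht => hgreatest t (hT ht) (hx t ht)
  exact A.le_antisymm hxs (A.le_trans hsc hcx)

lemma isSupIn_sharpSet_of_isSupIn_univ {T : Set E} {z : E} (hSD : A.SharplyDominating)
    (hT : T ⊆ A.sharpSet) (hz : A.IsSupIn Set.univ T z) : A.IsSupIn A.sharpSet T z := by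
  obtain ⟨w, hw, hzw, hleast⟩ := hSD.exists_least_sharp_ge z
  have hwT : A.IsSupIn A.sharpSet T w :=
    ⟨hw, fun t ht => A.le_trans (hz.2.1 t ht) hzw,
      fun v hv hvT => hleast v hv (hz.2.2 v trivial hvT)⟩
  obtain rfl := hSD.eq_of_isUB_of_le hT hwT hz.2.1 hzw
  exact ⟨hw, hz.2.1, fun v _ hvT => hz.2.2 v trivial hvT⟩

end SharplyDominating

namespace SDominating

lemma isSupIn_univ_of_isSupIn_sharpSet {T : Set E} {s : E} (hSD : A.SDominating)
    (hT : T ⊆ A.sharpSet) (hs : A.IsSupIn A.sharpSet T s) : A.IsSupIn Set.univ T s := by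
  refine ⟨trivial, hs.2.1, fun u _ huT => ?_⟩
  obtain ⟨m, hm⟩ := hSD.2 u s hs.1
  have hmT : A.IsUB T m := fun t ht => hm.2.2 t trivial (by
    rintro y (rfl | rfl)
    exacts [huT t ht, hs.2.1 t ht])
  have hms : m = s := hSD.1.eq_of_isUB_of_le hT hs hmT (hm.2.1 s (by simp))
  exact hms ▸ hm.2.1 u (by simp)

lemma bifull_sharpSet (hSD : A.SDominating) : A.Bifull A.sharpSet := fun _ hT =>
  ⟨fun _ => hSD.isSupIn_univ_of_isSupIn_sharpSet hT,
    fun _ => hSD.1.isSupIn_sharpSet_of_isSupIn_univ hT⟩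

end SDominating

end EffectAlgebra

/-- In an S-dominating effect algebra, a join of sharp elements computed in `E`
is sharp and is their join in `S(E)`; hence `S(E)` is bifull in `E`. -/
theorem stmt6 {E : Type u} (A : EffectAlgebra E) (hSD : A.SDominating)
    (S : Set E) (hS : S ⊆ A.sharpSet) (z : E)
    (hz : A.IsSupIn Set.univ S z) :
    z ∈ A.sharpSet ∧ A.IsSupIn A.sharpSet S z ∧ A.Bifull A.sharpSet := by
  have hzS := hSD.1.isSupIn_sharpSet_of_isSupIn_univ hS hz
  exact ⟨hzS.1, hzS, hSD.bifull_sharpSet⟩
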